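/- Let d ≥ 1, let ν be a σ-finite measure on ℝ^d, and let c_ν > 0 be such that ∫_{B(0,1)} ‖z‖² dν(z) < ∞ and ∫_{‖z‖≥1} exp(c_ν‖z‖) dν(z) < ∞. Let T, M, c_γ > 0, let f : [0,T] → ℝ be measurable with |f(s)| ≤ M for all s, and let G : [0,T] → ℝ^d be measurable with ‖G(s)‖ ≤ c_γ for all s. Then for every y with 0 < y ≤ c_ν (2 M c_γ)^{−1}, ∫₀^T ∫_{ℝ^d} (exp(y f(s) ⟨G(s), z⟩) − 1 − y f(s) ⟨G(s), z⟩) dν(z) ds ≤ c₁ y² ∫₀^T f(s)² ds, where c₁ := c_γ² ( (1/2) exp(c_ν/2) ∫_{B(0,1)} ‖z‖² dν(z) + 4 c_ν^{−2} ∫_{‖z‖≥1} exp(c_ν‖z‖) dν(z) ). -/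

import Mathlib

open MeasureTheory Real
open scoped RealInnerProductSpace

/-!
Taylor's bound `exp x - 1 - x ≤ x ^ 2 / 2 * exp |x|` at `x = ⟪v, z⟫`, where `v = (y * f s) • G s`
has `‖v‖ ≤ c_ν / 2`, bounds the integrand by `‖v‖ ^ 2 * ‖z‖ ^ 2 / 2 * exp (c_ν / 2 * ‖z‖)`.
On the unit ball this is at most `‖v‖ ^ 2 * (exp (c_ν / 2) / 2) * ‖z‖ ^ 2`; off it, the polynomial
factor is absorbed by the other half of the exponential moment,
`‖z‖ ^ 2 ≤ 8 / c_ν ^ 2 * exp (c_ν / 2 * ‖z‖)`. Integrating in `z` and then in `s`, with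
`‖v‖ ^ 2 ≤ c_γ ^ 2 * y ^ 2 * f s ^ 2`, gives the bound.
-/

theorem hasSum_pow_div_factorial_exp (x : ℝ) :
    HasSum (fun n => x ^ n / n.factorial) (exp x) := by
  rw [Real.exp_eq_exp_ℝ]; exact NormedSpace.expSeries_div_hasSum_exp x

theorem exp_sub_one_sub_le_sq_div_two_mul_exp_abs (x : ℝ) :
    exp x - 1 - x ≤ x ^ 2 / 2 * exp |x| := by
  have hx : HasSum (fun n => x ^ (n + 2) / (n + 2).factorial) (exp x - 1 - x) := by
    simpa [Finset.sum_range_succ, sub_sub] using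
      (hasSum_nat_add_iff' 2).2 (hasSum_pow_div_factorial_exp x)
  have habs := (hasSum_pow_div_factorial_exp |x|).mul_left (x ^ 2 / 2)
  refine hasSum_le (fun n => ?_) hx habs
  have hfact : (2 * n.factorial : ℝ) ≤ (n + 2).factorial := by
    norm_cast
    rw [Nat.factorial_succ, Nat.factorial_succ, ← mul_assoc]
    exact Nat.mul_le_mul_right _ (by nlinarith)
  calc x ^ (n + 2) / (n + 2).factorial ≤ |x| ^ (n + 2) / (2 * n.factorial) := by
        have hpow : x ^ (n + 2) ≤ |x| ^ (n + 2) := (le_abs_self _).trans (abs_pow x _).le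
        gcongr
    _ = x ^ 2 / 2 * (|x| ^ n / n.factorial) := by
        rw [pow_add, mul_comm, sq_abs]; field_simp

theorem sq_mul_sq_le_eight_mul_exp {c w : ℝ} (hc : 0 ≤ c) (hw : 0 ≤ w) :
    c ^ 2 * w ^ 2 ≤ 8 * exp (c / 2 * w) := by
  nlinarith [quadratic_le_exp_of_nonneg (by positivity : 0 ≤ c / 2 * w)]

theorem setLIntegral_le_ofReal_mul_setIntegral {α : Type*} [MeasurableSpace α] {μ : Measure α}
    {s : Set α} (hs : MeasurableSet s) {F : α → ENNReal} {g : α → ℝ} (hg : IntegrableOn g s μ)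
    (hg₀ : ∀ x ∈ s, 0 ≤ g x) {C : ℝ} (hC : 0 ≤ C) (hF : ∀ x ∈ s, F x ≤ ENNReal.ofReal (C * g x)) :
    ∫⁻ x in s, F x ∂μ ≤ ENNReal.ofReal (C * ∫ x in s, g x ∂μ) :=
  calc ∫⁻ x in s, F x ∂μ ≤ ∫⁻ x in s, ENNReal.ofReal (C * g x) ∂μ := setLIntegral_mono' hs hF
    _ = ENNReal.ofReal (C * ∫ x in s, g x ∂μ) := by
      rw [← integral_const_mul, ofReal_integral_eq_lintegral_ofReal (hg.const_mul C)
        (ae_restrict_of_forall_mem hs fun x hx => mul_nonneg hC (hg₀ x hx))]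

section ExpMomentConstant

variable {E : Type*} [NormedAddCommGroup E] [MeasurableSpace E]

/-- The constant `c₁ / c_γ ^ 2` of the paper. -/
noncomputable def expMomentConstant (ν : Measure E) (c : ℝ) : ℝ :=
  1 / 2 * exp (c / 2) * (∫ z in Metric.ball (0 : E) 1, ‖z‖ ^ 2 ∂ν)
    + 4 / c ^ 2 * ∫ z in {z : E | 1 ≤ ‖z‖}, exp (c * ‖z‖) ∂ν

theorem expMomentConstant_nonneg (ν : Measure E) (c : ℝ) : 0 ≤ expMomentConstant ν c := by
  unfold expMomentConstant; positivity

end ExpMomentConstant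

section InnerProductSpace

variable {E : Type*} [NormedAddCommGroup E] [InnerProductSpace ℝ E]

theorem exp_inner_sub_one_sub_le (v z : E) :
    exp ⟪v, z⟫ - 1 - ⟪v, z⟫ ≤ ‖v‖ ^ 2 * ‖z‖ ^ 2 / 2 * exp (‖v‖ * ‖z‖) := by
  have h := abs_real_inner_le_norm v z
  calc exp ⟪v, z⟫ - 1 - ⟪v, z⟫ ≤ ⟪v, z⟫ ^ 2 / 2 * exp |⟪v, z⟫| :=
        exp_sub_one_sub_le_sq_div_two_mul_exp_abs _
    _ ≤ (‖v‖ * ‖z‖) ^ 2 / 2 * exp (‖v‖ * ‖z‖) := by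
        rw [← sq_abs]; gcongr
    _ = _ := by ring

variable {c : ℝ} {v : E}

theorem exp_inner_sub_one_sub_le_of_norm_le_one (hv : ‖v‖ ≤ c / 2) {z : E} (hz : ‖z‖ ≤ 1) :
    exp ⟪v, z⟫ - 1 - ⟪v, z⟫ ≤ ‖v‖ ^ 2 * (1 / 2 * exp (c / 2) * ‖z‖ ^ 2) := by
  have : ‖v‖ * ‖z‖ ≤ c / 2 := (mul_le_of_le_one_right (norm_nonneg v) hz).trans hv
  calc exp ⟪v, z⟫ - 1 - ⟪v, z⟫ ≤ ‖v‖ ^ 2 * ‖z‖ ^ 2 / 2 * exp (‖v‖ * ‖z‖) :=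
        exp_inner_sub_one_sub_le v z
    _ ≤ ‖v‖ ^ 2 * ‖z‖ ^ 2 / 2 * exp (c / 2) := by gcongr
    _ = _ := by ring

theorem exp_inner_sub_one_sub_le_exp_mul_norm (hc : 0 < c) (hv : ‖v‖ ≤ c / 2) (z : E) :
    exp ⟪v, z⟫ - 1 - ⟪v, z⟫ ≤ ‖v‖ ^ 2 * (4 / c ^ 2 * exp (c * ‖z‖)) := by
  have hexp : exp (‖v‖ * ‖z‖) ≤ exp (c / 2 * ‖z‖) := by gcongr
  have hsq := sq_mul_sq_le_eight_mul_exp hc.le (norm_nonneg z)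
  calc exp ⟪v, z⟫ - 1 - ⟪v, z⟫ ≤ ‖v‖ ^ 2 * ‖z‖ ^ 2 / 2 * exp (‖v‖ * ‖z‖) :=
        exp_inner_sub_one_sub_le v z
    _ ≤ ‖v‖ ^ 2 * (8 / c ^ 2 * exp (c / 2 * ‖z‖)) / 2 * exp (c / 2 * ‖z‖) := by
        gcongr
        rw [div_mul_eq_mul_div, le_div_iff₀ (by positivity)]
        linarith
    _ = _ := by
        rw [show c * ‖z‖ = c / 2 * ‖z‖ + c / 2 * ‖z‖ by ring, exp_add]
        ring

theorem lintegral_exp_inner_sub_one_sub_le [MeasurableSpace E] [OpensMeasurableSpace E]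
    {ν : Measure E} (hc : 0 < c)
    (h2 : IntegrableOn (fun z => ‖z‖ ^ 2) (Metric.ball (0 : E) 1) ν)
    (hexp : IntegrableOn (fun z => exp (c * ‖z‖)) {z : E | 1 ≤ ‖z‖} ν) (hv : ‖v‖ ≤ c / 2) :
    ∫⁻ z, ENNReal.ofReal (exp ⟪v, z⟫ - 1 - ⟪v, z⟫) ∂ν
      ≤ ENNReal.ofReal (‖v‖ ^ 2 * expMomentConstant ν c) := by
  have hcompl : (Metric.ball (0 : E) 1)ᶜ = {z | 1 ≤ ‖z‖} := by ext; simp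
  have hball := setLIntegral_le_ofReal_mul_setIntegral measurableSet_ball h2
    (fun _ _ => by positivity) (by positivity)
    (fun z hz => ENNReal.ofReal_le_ofReal ((exp_inner_sub_one_sub_le_of_norm_le_one hv
      (mem_ball_zero_iff.1 hz).le).trans_eq (mul_assoc _ _ _).symm))
  have htail := setLIntegral_le_ofReal_mul_setIntegral
    (measurableSet_le measurable_const measurable_norm) hexp
    (fun _ _ => by positivity) (by positivity)
    (fun z _ => ENNReal.ofReal_le_ofReal ((exp_inner_sub_one_sub_le_exp_mul_norm hc hv z).trans_eq
      (mul_assoc _ _ _).symm))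
  rw [← lintegral_add_compl _ measurableSet_ball, hcompl]
  calc _ ≤ _ := add_le_add hball htail
    _ = _ := by
      rw [← ENNReal.ofReal_add (by positivity) (by positivity), expMomentConstant]
      ring_nf

end InnerProductSpace

theorem compensator_bound_exponential_moment_pathwise_general
    {d : ℕ}
    (ν : Measure (EuclideanSpace ℝ (Fin d)))
    (cν : ℝ) (hcν : 0 < cν)
    (h2 : IntegrableOn (fun z => ‖z‖ ^ 2) (Metric.ball (0 : EuclideanSpace ℝ (Fin d)) 1) ν)
    (hexp : IntegrableOn (fun z => Real.exp (cν * ‖z‖))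
      {z : EuclideanSpace ℝ (Fin d) | 1 ≤ ‖z‖} ν)
    (T M cγ : ℝ) (hM : 0 < M) (hcγ : 0 < cγ)
    (f : ℝ → ℝ) (hf : Measurable f) (hfb : ∀ s ∈ Set.Icc (0 : ℝ) T, |f s| ≤ M)
    (G : ℝ → EuclideanSpace ℝ (Fin d))
    (hGb : ∀ s ∈ Set.Icc (0 : ℝ) T, ‖G s‖ ≤ cγ)
    (y : ℝ) (hy : 0 < y) (hy2 : y ≤ cν * (2 * M * cγ)⁻¹) :
    ∫⁻ s in Set.Icc (0 : ℝ) T,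
        ∫⁻ z, ENNReal.ofReal
          (Real.exp (y * f s * (inner ℝ (G s) z : ℝ)) - 1 - y * f s * (inner ℝ (G s) z : ℝ)) ∂ν
      ≤ ENNReal.ofReal
        ((cγ ^ 2 *
            ((1 / 2) * Real.exp (cν / 2) *
                (∫ z in Metric.ball (0 : EuclideanSpace ℝ (Fin d)) 1, ‖z‖ ^ 2 ∂ν)
              + 4 / cν ^ 2 *
                (∫ z in {z : EuclideanSpace ℝ (Fin d) | 1 ≤ ‖z‖}, Real.exp (cν * ‖z‖) ∂ν)))
          * y ^ 2 * ∫ s in Set.Icc (0 : ℝ) T, (f s) ^ 2) := by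
  have hyMcγ : y * M * cγ ≤ cν / 2 := by
    rw [le_mul_inv_iff₀ (by positivity)] at hy2; linarith
  have hnorm : ∀ s ∈ Set.Icc (0 : ℝ) T, ‖(y * f s) • G s‖ ≤ y * |f s| * cγ := fun s hs => by
    rw [norm_smul, norm_mul, Real.norm_of_nonneg hy.le, Real.norm_eq_abs]
    gcongr
    exact hGb s hs
  have hK := expMomentConstant_nonneg ν cν
  have hf2 : IntegrableOn (fun s => f s ^ 2) (Set.Icc 0 T) :=
    Measure.integrableOn_of_bounded measure_Icc_lt_top.ne (hf.pow_const 2).aestronglyMeasurable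
      (M := M ^ 2) (ae_restrict_of_forall_mem measurableSet_Icc fun s hs => by
        rw [norm_pow, Real.norm_eq_abs]; gcongr; exact hfb s hs)
  refine setLIntegral_le_ofReal_mul_setIntegral (C := cγ ^ 2 * expMomentConstant ν cν * y ^ 2)
    measurableSet_Icc hf2 (fun _ _ => sq_nonneg _) (by positivity) fun s hs => ?_
  have hvs : ‖(y * f s) • G s‖ ≤ cν / 2 :=
    (hnorm s hs).trans (le_trans (by gcongr; exact hfb s hs) hyMcγ)
  simp only [← real_inner_smul_left]
  refine (lintegral_exp_inner_sub_one_sub_le hcν h2 hexp hvs).trans (ENNReal.ofReal_le_ofReal ?_)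
  have hsq : ‖(y * f s) • G s‖ ^ 2 ≤ (y * |f s| * cγ) ^ 2 := by gcongr; exact hnorm s hs
  calc ‖(y * f s) • G s‖ ^ 2 * expMomentConstant ν cν
      ≤ (y * |f s| * cγ) ^ 2 * expMomentConstant ν cν := by gcongr
    _ = _ := by rw [mul_pow, mul_pow, sq_abs]; ring

/-- Lemma A.2 of the paper, stated pathwise: quadratic compensator bound under an
exponential moment assumption on the Lévy measure. -/
theorem compensator_bound_exponential_moment_pathwise
    {d : ℕ} (hd : 1 ≤ d)
    (ν : Measure (EuclideanSpace ℝ (Fin d))) [SigmaFinite ν]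
    (cν : ℝ) (hcν : 0 < cν)
    (h2 : IntegrableOn (fun z => ‖z‖ ^ 2) (Metric.ball (0 : EuclideanSpace ℝ (Fin d)) 1) ν)
    (hexp : IntegrableOn (fun z => Real.exp (cν * ‖z‖))
      {z : EuclideanSpace ℝ (Fin d) | 1 ≤ ‖z‖} ν)
    (T M cγ : ℝ) (hT : 0 < T) (hM : 0 < M) (hcγ : 0 < cγ)
    (f : ℝ → ℝ) (hf : Measurable f) (hfb : ∀ s ∈ Set.Icc (0 : ℝ) T, |f s| ≤ M)
    (G : ℝ → EuclideanSpace ℝ (Fin d)) (hG : Measurable G)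
    (hGb : ∀ s ∈ Set.Icc (0 : ℝ) T, ‖G s‖ ≤ cγ)
    (y : ℝ) (hy : 0 < y) (hy2 : y ≤ cν * (2 * M * cγ)⁻¹) :
    ∫⁻ s in Set.Icc (0 : ℝ) T,
        ∫⁻ z, ENNReal.ofReal
          (Real.exp (y * f s * (inner ℝ (G s) z : ℝ)) - 1 - y * f s * (inner ℝ (G s) z : ℝ)) ∂ν
      ≤ ENNReal.ofReal
        ((cγ ^ 2 *
            ((1 / 2) * Real.exp (cν / 2) *
                (∫ z in Metric.ball (0 : EuclideanSpace ℝ (Fin d)) 1, ‖z‖ ^ 2 ∂ν)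
              + 4 / cν ^ 2 *
                (∫ z in {z : EuclideanSpace ℝ (Fin d) | 1 ≤ ‖z‖}, Real.exp (cν * ‖z‖) ∂ν)))
          * y ^ 2 * ∫ s in Set.Icc (0 : ℝ) T, (f s) ^ 2) :=
  compensator_bound_exponential_moment_pathwise_general ν cν hcν h2 hexp T M cγ hM hcγ f hf hfb G
    hGb y hy hy2
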